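/- arXiv:1912.02217 — 3 statements merged into one kernel-verified Lean document; each statement's English description precedes it below -/
import Mathlib

section
/- Let S_x, S_y, M be strings, E a minimum-cost edit sequence from M to S_y containing the substitution (a→c) at position i of M, and let M̂ be obtained from M by applying the substitution (a→b) at the same position i. If ω(b→c) ≤ ω(a→c), then d(M̂, S_y) ≤ d(M, S_y). -/
open scoped BigOperators

namespace Edit

variable {α : Type*}

/-- An edit operation is a pair `(a, b)` over `Σ ∪ {ε}` (with `none` playing the role of `ε`);
substitutions are `(some a, some b)`, deletions `(some a, none)`, insertions `(none, some b)`. -/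
abbrev EditOp (α : Type*) := Option α × Option α

/-- The string (of length 0 or 1) corresponding to a symbol in `Σ ∪ {ε}`. -/
def optList : Option α → List α
  | none => []
  | some a => [a]

/-- The source string of an edit sequence (alignment). -/
def src (E : List (EditOp α)) : List α := E.filterMap Prod.fst

/-- The target string of an edit sequence (alignment). -/
def tgt (E : List (EditOp α)) : List α := E.filterMap Prod.snd

/-- `Transforms E s t` means the edit sequence `E` transforms the string `s` into `t`:
each operation is a genuine edit operation (not `(ε, ε)`), the operations applied
position-wise consume `s` and produce `t`. -/
def Transforms (E : List (EditOp α)) (s t : List α) : Prop :=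
  (∀ e ∈ E, e ≠ ((none : Option α), (none : Option α))) ∧ s = src E ∧ t = tgt E

/-- Total cost `ω(E)` of an edit sequence. -/
def cost (ω : EditOp α → ℝ) (E : List (EditOp α)) : ℝ := (E.map ω).sum

/-- The edit distance `d(s, t)`: the minimum (infimum) cost over all edit sequences
transforming `s` into `t`. -/
noncomputable def editDist (ω : EditOp α → ℝ) (s t : List α) : ℝ :=
  sInf {c : ℝ | ∃ E : List (EditOp α), Transforms E s t ∧ cost ω E = c}

end Edit

open Edit in
/-- Lemma 1 of the paper: if a minimum-cost edit sequence from `M` to `Sy` contains the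
substitution `(a → c)` at position `i` of `M`, and `Mhat` is obtained from `M` by
substituting `b` for `a` at position `i`, then `ω(b → c) ≤ ω(a → c)` implies
`d(Mhat, Sy) ≤ d(M, Sy)`. -/
theorem statement2 {α : Type*} (ω : EditOp α → ℝ)
    (hnn : ∀ e : EditOp α, 0 ≤ ω e)
    (M Sy Mhat : List α) (a b c : α) (i : ℕ) (E1 E2 : List (EditOp α))
    (hT : Transforms (E1 ++ ((some a, some c) : EditOp α) :: E2) M Sy)
    (hmin : editDist ω M Sy = cost ω (E1 ++ ((some a, some c) : EditOp α) :: E2))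
    (hi : i = (src E1).length)
    (hMhat : Mhat = src E1 ++ b :: src E2)
    (hbc : ω (some b, some c) ≤ ω (some a, some c)) :
    editDist ω Mhat Sy ≤ editDist ω M Sy := by
  obtain ⟨hne, hM, hSy⟩ := hT
  set E' : List (EditOp α) := E1 ++ ((some b, some c) : EditOp α) :: E2 with hE'
  have hT' : Transforms E' Mhat Sy := by
    refine ⟨?_, ?_, ?_⟩
    · intro e he
      rcases List.mem_append.1 he with h | h
      · exact hne e (List.mem_append.2 (Or.inl h))
      · rcases List.mem_cons.1 h with rfl | h
        · simp
        · exact hne e (by simp [h])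
    · simp [hMhat, hE', src, List.filterMap_append, optList]
    · have := hSy
      simp [tgt, hE', List.filterMap_append] at this ⊢
      exact this
  have hcost : cost ω E' ≤ cost ω (E1 ++ ((some a, some c) : EditOp α) :: E2) := by
    simp only [cost, hE', List.map_append, List.map_cons, List.sum_append, List.sum_cons]
    linarith
  have hmem : cost ω E' ∈ {c : ℝ | ∃ E : List (EditOp α), Transforms E Mhat Sy ∧ cost ω E = c} :=
    ⟨E', hT', rfl⟩
  have hbdd : BddBelow {c : ℝ | ∃ E : List (EditOp α), Transforms E Mhat Sy ∧ cost ω E = c} := by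
    refine ⟨0, ?_⟩
    rintro x ⟨E, _, rfl⟩
    refine List.sum_nonneg ?_
    intro x hx
    obtain ⟨e, -, rfl⟩ := List.mem_map.1 hx
    exact hnn e
  calc editDist ω Mhat Sy ≤ cost ω E' := csInf_le hbdd hmem
    _ ≤ _ := hcost.trans hmin.ge
end

section
/- Suppose for every string S_i in a finite set S, the edit operation e_k belongs to some minimum-cost edit sequence transforming Ŝ^{t-1} into S_i, and let Ŝ^t be obtained from Ŝ^{t-1} by applying e_k (at the corresponding position). Then Σ_{S_i ∈ S} d(Ŝ^t, S_i) ≤ Σ_{S_i ∈ S} d(Ŝ^{t-1}, S_i) - |S|·ω(e_k). -/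
open scoped BigOperators

open Edit in
private lemma src_cons {α : Type*} (e : EditOp α) (E : List (EditOp α)) :
    src (e :: E) = optList e.1 ++ src E := by
  obtain ⟨a, b⟩ := e; cases a <;> simp [src, optList, List.filterMap_cons]

open Edit in
private lemma tgt_cons {α : Type*} (e : EditOp α) (E : List (EditOp α)) :
    tgt (e :: E) = optList e.2 ++ tgt E := by
  obtain ⟨a, b⟩ := e; cases b <;> simp [tgt, optList, List.filterMap_cons]

open Edit in
private lemma key {α : Type*} (ω : EditOp α → ℝ)
    (hnn : ∀ e : EditOp α, 0 ≤ ω e) (hid : ∀ a : Option α, ω (a, a) = 0)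
    (s0 s1 x : List α) (e : EditOp α) (p : ℕ)
    (h : ∃ E1 E2 : List (EditOp α),
      Transforms (E1 ++ e :: E2) s0 x ∧ (src E1).length = p ∧
      editDist ω s0 x = cost ω (E1 ++ e :: E2))
    (hs1 : s1 = s0.take p ++ optList e.2 ++ s0.drop (p + (optList e.1).length)) :
    editDist ω s1 x ≤ editDist ω s0 x - ω e := by
  obtain ⟨E1, E2, ⟨hne, hsrc, htgt⟩, hp, hopt⟩ := h
  have hs0 : s0 = (src E1 ++ optList e.1) ++ src E2 := by
    rw [hsrc]; simp only [src, List.filterMap_append, List.append_assoc]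
    congr 1; exact src_cons e E2
  set mid : List (EditOp α) := (optList e.2).map (fun a => (some a, some a)) with hmid
  have hsrcmid : src mid = optList e.2 := by
    obtain ⟨a, b⟩ := e; cases b <;> simp [hmid, src, optList]
  have htgtmid : tgt mid = optList e.2 := by
    obtain ⟨a, b⟩ := e; cases b <;> simp [hmid, tgt, optList]
  have hcostmid : cost ω mid = 0 := by
    obtain ⟨a, b⟩ := e; cases b <;> simp [hmid, cost, optList, hid]
  have hs1' : s1 = src E1 ++ optList e.2 ++ src E2 := by
    rw [hs1, hs0]
    have h1 : ((src E1 ++ optList e.1) ++ src E2).take p = src E1 := by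
      rw [List.append_assoc, List.take_append_of_le_length (by omega)]
      exact List.take_of_length_le (by omega)
    have h2 : ((src E1 ++ optList e.1) ++ src E2).drop (p + (optList e.1).length)
        = src E2 := by
      have : (src E1 ++ optList e.1).length = p + (optList e.1).length := by
        simp [hp]
      rw [List.drop_left' this]
    rw [h1, h2]
  set E' : List (EditOp α) := E1 ++ mid ++ E2 with hE'
  have hT : Transforms E' s1 x := by
    refine ⟨?_, ?_, ?_⟩
    · intro f hf
      simp only [hE', List.mem_append] at hf
      rcases hf with (hf | hf) | hf
      · exact hne f (by simp [hf])
      · simp only [hmid, List.mem_map] at hf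
        obtain ⟨a, _, rfl⟩ := hf
        simp
      · exact hne f (by simp [hf])
    · rw [hs1']
      simp only [hE', src, List.filterMap_append]
      rw [show (List.filterMap Prod.fst mid : List α) = src mid from rfl, hsrcmid]
    · rw [htgt]
      simp only [hE', tgt, List.filterMap_append]
      rw [show (List.filterMap Prod.snd mid : List α) = tgt mid from rfl, htgtmid,
        show (List.filterMap Prod.snd (e :: E2) : List α) = tgt (e :: E2) from rfl,
        tgt_cons]
      simp [tgt, List.append_assoc]
  have hcost : cost ω E' = editDist ω s0 x - ω e := by
    rw [hopt]
    simp only [hE', cost, List.map_append, List.sum_append, List.map_cons,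
      List.sum_cons]
    have : (List.map ω mid).sum = 0 := hcostmid
    rw [this]; ring
  have hbdd : BddBelow {c : ℝ | ∃ E : List (EditOp α), Transforms E s1 x ∧ cost ω E = c} := by
    refine ⟨0, ?_⟩
    rintro c ⟨E, _, rfl⟩
    exact List.sum_nonneg (by rintro r hr; obtain ⟨f, _, rfl⟩ := List.mem_map.mp hr; exact hnn f)
  calc editDist ω s1 x ≤ cost ω E' := csInf_le hbdd ⟨E', hT, rfl⟩
    _ = editDist ω s0 x - ω e := hcost

open Edit in
/-- If for every string `x` in the finite set `S` the edit operation `e` (at the fixed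
position `p` of `s0`) belongs to some minimum-cost edit sequence transforming `s0` into
`x`, and `s1` is obtained from `s0` by applying `e` at position `p`, then
`Σ_{x ∈ S} d(s1, x) ≤ Σ_{x ∈ S} d(s0, x) - |S|·ω(e)`. -/
theorem statement5 {α : Type*} (ω : EditOp α → ℝ)
    (hnn : ∀ e : EditOp α, 0 ≤ ω e)
    (hid : ∀ a : Option α, ω (a, a) = 0)
    (S : Finset (List α)) (s0 s1 : List α) (e : EditOp α) (p : ℕ)
    (hall : ∀ x ∈ S, ∃ E1 E2 : List (EditOp α),
      Transforms (E1 ++ e :: E2) s0 x ∧ (src E1).length = p ∧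
      editDist ω s0 x = cost ω (E1 ++ e :: E2))
    (hs1 : s1 = s0.take p ++ optList e.2 ++ s0.drop (p + (optList e.1).length)) :
    ∑ x ∈ S, editDist ω s1 x ≤ ∑ x ∈ S, editDist ω s0 x - (S.card : ℝ) * ω e := by
  have h : ∀ x ∈ S, editDist ω s1 x ≤ editDist ω s0 x - ω e := fun x hx =>
    key ω hnn hid s0 s1 x e p (hall x hx) hs1
  calc ∑ x ∈ S, editDist ω s1 x ≤ ∑ x ∈ S, (editDist ω s0 x - ω e) :=
        Finset.sum_le_sum h
    _ = ∑ x ∈ S, editDist ω s0 x - (S.card : ℝ) * ω e := by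
        rw [Finset.sum_sub_distrib, Finset.sum_const, nsmul_eq_mul]
end

section
/- If M̂ is obtained from M by deleting the symbol a at position i, and some minimum-cost edit sequence E from M to S_y contains the deletion (a→ε) at position i, then d(M̂, S_y) = d(M, S_y) - ω(a→ε). -/
open scoped BigOperators

namespace Edit

variable {α : Type*}

lemma src_append (A B : List (EditOp α)) : src (A ++ B) = src A ++ src B :=
  List.filterMap_append ..

lemma tgt_append (A B : List (EditOp α)) : tgt (A ++ B) = tgt A ++ tgt B :=
  List.filterMap_append ..

lemma cost_append (ω : EditOp α → ℝ) (A B : List (EditOp α)) :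
    cost ω (A ++ B) = cost ω A + cost ω B := by
  simp [cost]

lemma cost_nonneg (ω : EditOp α → ℝ) (hnn : ∀ e, 0 ≤ ω e) (E : List (EditOp α)) :
    0 ≤ cost ω E :=
  List.sum_nonneg (by rintro x hx; obtain ⟨e, _, rfl⟩ := List.mem_map.1 hx; exact hnn e)

lemma eraseIdx_middle (L R : List α) (a : α) :
    (L ++ a :: R).eraseIdx L.length = L ++ R := by
  induction L with
  | nil => simp
  | cons x xs ih => simp [List.eraseIdx, ih]

lemma split_src (E : List (EditOp α)) (n : ℕ) (hn : n ≤ (src E).length) :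
    ∃ A B, E = A ++ B ∧ src A = (src E).take n ∧ src B = (src E).drop n := by
  induction E generalizing n with
  | nil =>
    have : n = 0 := Nat.le_zero.1 (by simpa [src] using hn)
    subst this
    exact ⟨[], [], rfl, by simp [src], by simp [src]⟩
  | cons e rest ih =>
    cases n with
    | zero => exact ⟨[], e :: rest, rfl, by simp [src], by simp⟩
    | succ m =>
      obtain ⟨f, s⟩ := e
      cases f with
      | none =>
        have hs : src ((none, s) :: rest) = src rest := by simp [src]
        rw [hs] at hn ⊢
        obtain ⟨A, B, hAB, hA, hB⟩ := ih (m + 1) hn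
        exact ⟨(none, s) :: A, B, by rw [hAB]; rfl,
          by simpa [src] using hA, hB⟩
      | some x =>
        have hs : src ((some x, s) :: rest) = x :: src rest := by simp [src]
        rw [hs] at hn ⊢
        obtain ⟨A, B, hAB, hA, hB⟩ := ih m (Nat.succ_le_succ_iff.1 (by simpa using hn))
        have h1 : src ((some x, s) :: A) = x :: src A := by simp [src]
        exact ⟨(some x, s) :: A, B, by rw [hAB]; rfl,
          by rw [h1, hA, List.take_succ_cons], by simpa using hB⟩

end Edit


open Edit in
/-- If `Mhat` is obtained from `M` by deleting the symbol `a` at position `i`, and some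
minimum-cost edit sequence from `M` to `Sy` contains the deletion `(a → ε)` at position
`i`, then `d(Mhat, Sy) = d(M, Sy) - ω(a → ε)` (assuming `ω` symmetric with the
operation-level triangle inequality). -/
theorem statement13 {α : Type*} (ω : EditOp α → ℝ)
    (hnn : ∀ e : EditOp α, 0 ≤ ω e)
    (hid : ∀ a : Option α, ω (a, a) = 0)
    (hsymm : ∀ a b : Option α, ω (a, b) = ω (b, a))
    (htri : ∀ a b c : Option α, ω (a, c) ≤ ω (a, b) + ω (b, c))
    (M Sy Mhat : List α) (a : α) (i : ℕ) (E1 E2 : List (EditOp α))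
    (hT : Transforms (E1 ++ ((some a, none) : EditOp α) :: E2) M Sy)
    (hmin : editDist ω M Sy = cost ω (E1 ++ ((some a, none) : EditOp α) :: E2))
    (hi : i = (src E1).length)
    (hMhat : Mhat = M.eraseIdx i) :
    editDist ω Mhat Sy = editDist ω M Sy - ω (some a, none) := by
  obtain ⟨hops, hM, hSy⟩ := hT
  set del : EditOp α := (some a, none) with hdel
  set L := src E1 with hL
  set R := src E2 with hR
  -- basic facts
  have hsrcdel : src (del :: E2) = a :: R := by simp [src, hdel, hR]
  have htgtdel : tgt (del :: E2) = tgt E2 := by simp [tgt, hdel]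
  have hMeq : M = L ++ a :: R := by rw [hM, src_append, hsrcdel]
  have hSyeq : Sy = tgt E1 ++ tgt E2 := by rw [hSy, tgt_append, htgtdel]
  have hMhateq : Mhat = L ++ R := by
    rw [hMhat, hMeq, hi, eraseIdx_middle]
  have bdd : ∀ s t : List α,
      BddBelow {c : ℝ | ∃ E : List (EditOp α), Transforms E s t ∧ cost ω E = c} := by
    intro s t
    exact ⟨0, by rintro c ⟨E, _, rfl⟩; exact cost_nonneg ω hnn E⟩
  have hcostE : cost ω (E1 ++ del :: E2) = cost ω (E1 ++ E2) + ω del := by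
    rw [cost_append, cost_append]; simp [cost]; ring
  -- E1 ++ E2 transforms Mhat into Sy
  have hT' : Transforms (E1 ++ E2) Mhat Sy := by
    refine ⟨?_, ?_, ?_⟩
    · intro e he
      apply hops
      rcases List.mem_append.1 he with h | h
      · exact List.mem_append.2 (Or.inl h)
      · exact List.mem_append.2 (Or.inr (List.mem_cons_of_mem _ h))
    · rw [hMhateq, src_append]
    · rw [hSyeq, tgt_append]
  -- upper bound
  have hle : editDist ω Mhat Sy ≤ editDist ω M Sy - ω del := by
    have h1 : editDist ω Mhat Sy ≤ cost ω (E1 ++ E2) :=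
      csInf_le (bdd _ _) ⟨E1 ++ E2, hT', rfl⟩
    rw [hmin, hcostE]
    linarith
  -- lower bound
  have hge : editDist ω M Sy - ω del ≤ editDist ω Mhat Sy := by
    refine le_csInf ⟨cost ω (E1 ++ E2), E1 ++ E2, hT', rfl⟩ ?_
    rintro c ⟨E', ⟨hops', hsrc', htgt'⟩, rfl⟩
    -- split E' at source position i
    have hlen : i ≤ (src E').length := by
      rw [← hsrc', hMhateq, hi]
      simp
    obtain ⟨A, B, hAB, hA, hB⟩ := split_src E' i hlen
    have hsrcE' : src E' = L ++ R := by rw [← hsrc', hMhateq]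
    have hAL : src A = L := by
      rw [hA, hsrcE', hi, List.take_left]
    have hBR : src B = R := by
      rw [hB, hsrcE', hi, List.drop_left]
    set E'' : List (EditOp α) := A ++ del :: B with hE''
    have hT'' : Transforms E'' M Sy := by
      refine ⟨?_, ?_, ?_⟩
      · intro e he
        rcases List.mem_append.1 he with h | h
        · exact hops' e (hAB ▸ List.mem_append.2 (Or.inl h))
        · rcases List.mem_cons.1 h with h | h
          · rw [h]; simp [hdel]
          · exact hops' e (hAB ▸ List.mem_append.2 (Or.inr h))
      · rw [hMeq, hE'', src_append]
        have : src (del :: B) = a :: src B := by simp [src, hdel]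
        rw [this, hAL, hBR]
      · have : tgt E'' = tgt E' := by
          rw [hE'', hAB, tgt_append, tgt_append]
          simp [tgt, hdel]
        rw [this, htgt']
    have hcost'' : cost ω E'' = cost ω E' + ω del := by
      rw [hE'', hAB, cost_append, cost_append]
      simp [cost]; ring
    have h2 : editDist ω M Sy ≤ cost ω E'' :=
      csInf_le (bdd _ _) ⟨E'', hT'', rfl⟩
    rw [hcost''] at h2
    linarith
  linarith
end
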